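/- (Removable singularity of the Kerr–Vaidya–de Sitter charge at r = 1/H.) Let H > 0 and a ≠ 0, and set Z := 1 + H²·a². Define q̃(r) := (Z·r·arctan(H·a) − (r² + a²)·H·arctan(a/r)) / (2·Z·H·a·(r²·H² − 1)) for r > 0 with r ≠ 1/H. Then q̃(r) tends to (H·a − (1 − H²·a²)·arctan(H·a)) / (4·Z·H²·a) as r → 1/H (limit through values r ≠ 1/H). -/

import Mathlib

noncomputable section

open Real Filter Topology

/-- The coefficient of `−M′(ṽ)` in the Noether charge of the Kodama-like current of
Kerr–Vaidya–de Sitter spacetime. -/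
def qKVdS (H a r : ℝ) : ℝ :=
  ((1 + H ^ 2 * a ^ 2) * r * Real.arctan (H * a)
      - (r ^ 2 + a ^ 2) * H * Real.arctan (a / r))
    / (2 * (1 + H ^ 2 * a ^ 2) * H * a * (r ^ 2 * H ^ 2 - 1))

private lemma div_div_div_same (x y t : ℝ) (ht : t ≠ 0) : (x / t) / (y / t) = x / y := by
  rw [div_div_div_comm, div_self ht, div_one]

/-- Removable singularity of the Kerr–Vaidya–de Sitter charge at `r = 1/H`: the coefficient
`q̃(r)` tends to a finite value as `r → 1/H` through values `r ≠ 1/H`. -/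
theorem qKVdS_tendsto_at_inv_H (H a : ℝ) (hH : 0 < H) (ha : a ≠ 0) :
    Tendsto (fun r : ℝ => qKVdS H a r) (𝓝[≠] (1 / H))
      (𝓝 ((H * a - (1 - H ^ 2 * a ^ 2) * Real.arctan (H * a))
        / (4 * (1 + H ^ 2 * a ^ 2) * H ^ 2 * a))) := by
  have hH0 : H ≠ 0 := hH.ne'
  set c : ℝ := 1 / H with hc
  have hcne : c ≠ 0 := by simp [hc, hH0]
  have hac : a / c = H * a := by rw [hc]; field_simp
  set Z : ℝ := 1 + H ^ 2 * a ^ 2 with hZ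
  have hZpos : (0:ℝ) < Z := by positivity
  set n : ℝ → ℝ := fun r =>
    Z * r * Real.arctan (H * a) - (r ^ 2 + a ^ 2) * H * Real.arctan (a / r) with hn
  set d : ℝ → ℝ := fun r => 2 * Z * H * a * (r ^ 2 * H ^ 2 - 1) with hd
  have hn0 : n c = 0 := by
    simp only [hn, hac]
    have : Z * c = (c ^ 2 + a ^ 2) * H := by rw [hc, hZ]; field_simp
    rw [mul_comm (Z * c), mul_comm ((c ^ 2 + a ^ 2) * H)] at *
    rw [this]; ring
  have hd0 : d c = 0 := by
    simp only [hd, hc]; field_simp; ring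
  -- derivative of n at c
  have hinv : HasDerivAt (fun r : ℝ => a / r) (a * (-(c ^ 2)⁻¹)) c := by
    simpa [div_eq_mul_inv] using (hasDerivAt_inv hcne).const_mul a
  have harct : HasDerivAt (fun r : ℝ => Real.arctan (a / r))
      (1 / (1 + (a / c) ^ 2) * (a * (-(c ^ 2)⁻¹))) c := hinv.arctan
  have h1 : HasDerivAt (fun r : ℝ => Z * r * Real.arctan (H * a))
      (Z * Real.arctan (H * a)) c := by
    simpa [mul_comm, mul_assoc] using
      ((hasDerivAt_id c).const_mul Z).mul_const (Real.arctan (H * a))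
  have h2 : HasDerivAt (fun r : ℝ => (r ^ 2 + a ^ 2) * H * Real.arctan (a / r))
      ((2 * c * H) * Real.arctan (a / c)
        + (c ^ 2 + a ^ 2) * H * (1 / (1 + (a / c) ^ 2) * (a * (-(c ^ 2)⁻¹)))) c := by
    have hp : HasDerivAt (fun r : ℝ => (r ^ 2 + a ^ 2) * H) (2 * c * H) c := by
      have := ((hasDerivAt_pow 2 c).add_const (a ^ 2)).mul_const H
      simpa [mul_comm, mul_assoc] using this
    simpa [Pi.mul_def] using hp.mul harct
  have hdn : HasDerivAt n
      (Z * Real.arctan (H * a) - ((2 * c * H) * Real.arctan (a / c)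
        + (c ^ 2 + a ^ 2) * H * (1 / (1 + (a / c) ^ 2) * (a * (-(c ^ 2)⁻¹))))) c :=
    h1.sub h2
  have hdd : HasDerivAt d (2 * Z * H * a * (2 * c * H ^ 2)) c := by
    have : HasDerivAt (fun r : ℝ => r ^ 2 * H ^ 2 - 1) (2 * c * H ^ 2) c := by
      have := ((hasDerivAt_pow 2 c).mul_const (H ^ 2)).sub_const 1
      simpa [mul_comm, mul_assoc] using this
    simpa using this.const_mul (2 * Z * H * a)
  have hdd_ne : 2 * Z * H * a * (2 * c * H ^ 2) ≠ 0 := by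
    rw [hc]; field_simp
    exact mul_ne_zero (mul_ne_zero (mul_ne_zero (by norm_num) hZpos.ne') (pow_ne_zero _ hH0)) ha
  have hslope_n := hasDerivAt_iff_tendsto_slope.mp hdn
  have hslope_d := hasDerivAt_iff_tendsto_slope.mp hdd
  have hquot := hslope_n.div hslope_d hdd_ne
  have hfinal : (Z * Real.arctan (H * a) - ((2 * c * H) * Real.arctan (a / c)
        + (c ^ 2 + a ^ 2) * H * (1 / (1 + (a / c) ^ 2) * (a * (-(c ^ 2)⁻¹)))))
        / (2 * Z * H * a * (2 * c * H ^ 2))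
      = (H * a - (1 - H ^ 2 * a ^ 2) * Real.arctan (H * a))
        / (4 * (1 + H ^ 2 * a ^ 2) * H ^ 2 * a) := by
    rw [hac, hc, hZ]
    have hden : (1 : ℝ) + (H * a) ^ 2 ≠ 0 := by positivity
    field_simp
    ring
  rw [← hfinal]
  refine hquot.congr' ?_
  filter_upwards [self_mem_nhdsWithin] with r hr
  have hrc : r - c ≠ 0 := sub_ne_zero.mpr hr
  have hs : slope n c r = n r / (r - c) := by
    rw [slope_def_field, hn0, sub_zero]
  have hsd : slope d c r = d r / (r - c) := by
    rw [slope_def_field, hd0, sub_zero]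
  show slope n c r / slope d c r = qKVdS H a r
  rw [hs, hsd, div_div_div_same _ _ _ hrc]
  simp only [qKVdS, hn, hd, hZ]
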